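/- arXiv:1705.05397 — 5 statements merged into one kernel-verified Lean document; each statement's English description precedes it below -/
import Mathlib

section
/- Let E and Π be orthogonal projections on ℂⁿ, Ẽ = I − E, and for s > 0 set p^s_d = (1 − e^{−1/(4s²)})/2 and E_d = (E − Ẽ) Π (E − Ẽ). Then: (i) E_d is an orthogonal projection (E_d is Hermitian and E_d² = E_d); (ii) 0 ≤ p^s_d ≤ 1/2; and (iii) ∫_{−∞}^{+∞} (N^s_x)† Π N^s_x dx = (1 − p^s_d) Π + p^s_d E_d. (This is condition 2b of the technical Lemma underlying Theorem 2.) -/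
open MeasureTheory Matrix

/-- The Gaussian pointer wavefunction with spread `s`:
`G_s(x) = (π s²)^(−1/4) exp(−x²/(2 s²))`. -/
noncomputable def G (s x : ℝ) : ℝ :=
  (Real.pi * s ^ 2) ^ (-(1 / 4 : ℝ)) * Real.exp (-x ^ 2 / (2 * s ^ 2))

/-- The Kraus operators of the Gaussian pointer measurement of the projection `E`
with pointer spread `s`: `N^s_x = G_s(x−1)·E + G_s(x)·(I − E)`. -/
noncomputable def Ns {n : ℕ} (E : Matrix (Fin n) (Fin n) ℂ) (s x : ℝ) :
    Matrix (Fin n) (Fin n) ℂ :=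
  (G s (x - 1) : ℂ) • E + (G s x : ℂ) • (1 - E)

/-- The disturbance probability `p^s_d = (1 − e^{−1/(4s²)})/2`. -/
noncomputable def pd (s : ℝ) : ℝ := (1 - Real.exp (-1 / (4 * s ^ 2))) / 2

/-- The disturbance projector `E_d = (E − Ẽ) P (E − Ẽ)`, with `Ẽ = I − E`. -/
noncomputable def Ed {n : ℕ} (E P : Matrix (Fin n) (Fin n) ℂ) : Matrix (Fin n) (Fin n) ℂ :=
  (E - (1 - E)) * P * (E - (1 - E))

lemma G_mul_eq (s a b : ℝ) (hs : 0 < s) (x : ℝ) :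
    G s (x - a) * G s (x - b)
      = ((Real.pi * s ^ 2) ^ (-(1/2 : ℝ)) * Real.exp (-(a - b)^2 / (4 * s^2)))
        * Real.exp (-(1/s^2) * (x - (a+b)/2)^2) := by
  have hπ : (0:ℝ) < Real.pi * s ^ 2 := by positivity
  have h1 : (Real.pi * s ^ 2) ^ (-(1/4:ℝ)) * (Real.pi * s ^ 2) ^ (-(1/4:ℝ))
      = (Real.pi * s ^ 2) ^ (-(1/2:ℝ)) := by
    rw [← Real.rpow_add hπ]; norm_num
  have h2 : -(x-a)^2/(2*s^2) + -(x-b)^2/(2*s^2)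
      = -(a-b)^2/(4*s^2) + (-(1/s^2)*(x-(a+b)/2)^2) := by
    field_simp; ring
  unfold G
  calc (Real.pi * s ^ 2) ^ (-(1/4:ℝ)) * Real.exp (-(x-a)^2/(2*s^2)) *
        ((Real.pi * s ^ 2) ^ (-(1/4:ℝ)) * Real.exp (-(x-b)^2/(2*s^2)))
      = ((Real.pi * s ^ 2) ^ (-(1/4:ℝ)) * (Real.pi * s ^ 2) ^ (-(1/4:ℝ))) *
        Real.exp (-(x-a)^2/(2*s^2) + -(x-b)^2/(2*s^2)) := by
        rw [Real.exp_add]; ring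
    _ = _ := by rw [h1, h2, Real.exp_add]; ring

lemma G_integrable (s a b : ℝ) (hs : 0 < s) :
    Integrable (fun x => G s (x-a) * G s (x-b)) := by
  have hb : (0:ℝ) < 1/s^2 := by positivity
  have h := ((integrable_exp_neg_mul_sq hb).comp_sub_right ((a+b)/2)).const_mul
    ((Real.pi*s^2)^(-(1/2:ℝ)) * Real.exp (-(a-b)^2/(4*s^2)))
  exact h.congr (Filter.Eventually.of_forall fun x => (G_mul_eq s a b hs x).symm)

lemma G_integral (s a b : ℝ) (hs : 0 < s) :
    ∫ x, G s (x-a) * G s (x-b) = Real.exp (-(a-b)^2/(4*s^2)) := by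
  have hπ : (0:ℝ) < Real.pi * s ^ 2 := by positivity
  simp_rw [G_mul_eq s a b hs]
  rw [integral_const_mul,
    integral_sub_right_eq_self (fun y => Real.exp (-(1/s^2) * y^2)) ((a+b)/2),
    integral_gaussian]
  have : Real.pi / (1/s^2) = Real.pi * s ^ 2 := by field_simp
  rw [this, Real.sqrt_eq_rpow, mul_comm ((Real.pi * s ^ 2) ^ (-(1/2:ℝ))),
    mul_assoc, ← Real.rpow_add hπ]
  norm_num

lemma matrix_combo {n : ℕ} (E P : Matrix (Fin n) (Fin n) ℂ) (c : ℂ) :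
    E*P*E + c • (E*P*(1-E) + (1-E)*P*E) + (1-E)*P*(1-E)
      = ((1+c)/2) • P + ((1-c)/2) • Ed E P := by
  unfold Ed
  simp only [Matrix.mul_sub, Matrix.sub_mul, Matrix.mul_one, Matrix.one_mul, smul_sub,
    smul_add, sub_smul, add_smul, Matrix.mul_assoc]
  module

lemma Ns_expand {n : ℕ} (E P : Matrix (Fin n) (Fin n) ℂ) (hE : E.IsHermitian) (s x : ℝ) :
    (Ns E s x)ᴴ * P * Ns E s x
      = ((G s (x-1) * G s (x-1) : ℝ) : ℂ) • (E*P*E)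
        + ((G s (x-1) * G s x : ℝ) : ℂ) • (E*P*(1-E) + (1-E)*P*E)
        + ((G s x * G s x : ℝ) : ℂ) • ((1-E)*P*(1-E)) := by
  have hH : (Ns E s x)ᴴ = Ns E s x := by
    unfold Ns
    simp [conjTranspose_add, conjTranspose_smul, conjTranspose_sub, conjTranspose_one,
      hE.eq, Complex.star_def, Complex.conj_ofReal]
  rw [hH]; unfold Ns
  simp only [Matrix.add_mul, Matrix.mul_add, Matrix.smul_mul, Matrix.mul_smul, smul_smul,
    smul_add, Matrix.mul_assoc]
  push_cast
  module

/-- For orthogonal projections `E`, `P` and `s > 0`: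
(i) `E_d` is an orthogonal projection; (ii) `0 ≤ p^s_d ≤ 1/2`; and
(iii) `∫ (N^s_x)† P N^s_x dx = (1 − p^s_d) P + p^s_d E_d` (stated entrywise). -/
theorem gaussian_measurement_postselection_decomposition
    (n : ℕ) (E P : Matrix (Fin n) (Fin n) ℂ)
    (hE : E.IsHermitian) (hE2 : E * E = E)
    (hP : P.IsHermitian) (hP2 : P * P = P)
    (s : ℝ) (hs : 0 < s) :
    ((Ed E P)ᴴ = Ed E P ∧ Ed E P * Ed E P = Ed E P)
    ∧ (0 ≤ pd s ∧ pd s ≤ 1 / 2)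
    ∧ ∀ k l : Fin n,
        (∫ x : ℝ, ((Ns E s x)ᴴ * P * Ns E s x) k l)
          = (((1 - pd s : ℝ) : ℂ) • P + ((pd s : ℝ) : ℂ) • Ed E P) k l := by
  have hA : (E - (1 - E)) * (E - (1 - E)) = 1 := by
    simp only [Matrix.sub_mul, Matrix.mul_sub, Matrix.mul_one, Matrix.one_mul, hE2]
    abel
  refine ⟨⟨?_, ?_⟩, ⟨?_, ?_⟩, ?_⟩
  · unfold Ed
    simp [conjTranspose_mul, conjTranspose_sub, conjTranspose_one, hE.eq, hP.eq,
      Matrix.mul_assoc]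
  · unfold Ed
    calc (E - (1 - E)) * P * (E - (1 - E)) * ((E - (1 - E)) * P * (E - (1 - E)))
        = (E - (1 - E)) * (P * ((E - (1 - E)) * (E - (1 - E))) * P) * (E - (1 - E)) := by
          simp only [Matrix.mul_assoc]
      _ = (E - (1 - E)) * P * (E - (1 - E)) := by
          rw [hA, Matrix.mul_one, hP2]
  · unfold pd
    have h4 : (0:ℝ) < 4 * s ^ 2 := by positivity
    have : Real.exp (-1 / (4 * s ^ 2)) ≤ 1 := by
      rw [Real.exp_le_one_iff]
      exact (div_neg_of_neg_of_pos (by norm_num) h4).le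
    linarith
  · unfold pd
    have : 0 < Real.exp (-1 / (4 * s ^ 2)) := Real.exp_pos _
    linarith
  · intro k l
    set c : ℝ := Real.exp (-1 / (4 * s ^ 2)) with hc
    have hI1 : (∫ x, G s (x-1) * G s (x-1)) = 1 := by
      rw [G_integral s 1 1 hs]; norm_num
    have hI2 : (∫ x, G s (x-1) * G s x) = c := by
      have := G_integral s 1 0 hs
      simp only [sub_zero] at this
      rw [this, hc]; norm_num
    have hI3 : (∫ x, G s x * G s x) = 1 := by
      have := G_integral s 0 0 hs
      simp only [sub_zero] at this
      rw [this]; norm_num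
    have int1 : Integrable (fun x => G s (x-1) * G s (x-1)) := G_integrable s 1 1 hs
    have int2 : Integrable (fun x => G s (x-1) * G s x) := by
      have := G_integrable s 1 0 hs
      simpa using this
    have int3 : Integrable (fun x => G s x * G s x) := by
      have := G_integrable s 0 0 hs
      simpa using this
    set A : ℂ := (E*P*E) k l
    set B : ℂ := (E*P*(1-E) + (1-E)*P*E) k l
    set D : ℂ := ((1-E)*P*(1-E)) k l
    have hfun : ∀ x : ℝ, ((Ns E s x)ᴴ * P * Ns E s x) k l
        = (G s (x-1) * G s (x-1)) • A + (G s (x-1) * G s x) • B + (G s x * G s x) • D := by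
      intro x
      rw [Ns_expand E P hE s x]
      simp [A, B, D, Matrix.add_apply, Matrix.smul_apply, Complex.real_smul]
    have hint : (∫ x : ℝ, ((Ns E s x)ᴴ * P * Ns E s x) k l)
        = (1:ℝ) • A + c • B + (1:ℝ) • D := by
      simp_rw [hfun]
      rw [integral_add (by exact (int1.smul_const A).add (int2.smul_const B))
          (int3.smul_const D),
        integral_add (int1.smul_const A) (int2.smul_const B),
        integral_smul_const, integral_smul_const, integral_smul_const, hI1, hI2, hI3]
    rw [hint]
    have key := congrFun (congrFun (matrix_combo E P (c:ℂ)) k) l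
    simp only [Matrix.add_apply, Matrix.smul_apply, smul_eq_mul] at key ⊢
    have h1 : ((1 + (c:ℂ))/2) = ((1 - pd s : ℝ) : ℂ) := by
      unfold pd; push_cast [hc]; ring
    have h2 : ((1 - (c:ℂ))/2) = ((pd s : ℝ) : ℂ) := by
      unfold pd; push_cast [hc]; ring
    calc (1:ℝ) • A + c • B + (1:ℝ) • D
        = A + (c:ℂ) * B + D := by
          simp [Complex.real_smul]
      _ = ((1 + (c:ℂ))/2) * P k l + ((1 - (c:ℂ))/2) * Ed E P k l := by
          simpa [A, B, D, Matrix.add_apply] using key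
      _ = _ := by rw [h1, h2]
end

section
/- Let ρ be a density matrix and E, Π orthogonal projections on ℂⁿ, with Ẽ = I − E and N^s_x = G_s(x−1)·E + G_s(x)·Ẽ. Then in the weak measurement limit, lim_{s → ∞} ∫_{−∞}^{+∞} x · tr((N^s_x)† Π N^s_x ρ) dx = Re tr(ρ E Π), i.e. the post-selected pointer expectation recovers Allahverdyan's work quasi-probability (the Margenau–Hill distribution). -/
open MeasureTheory Matrix Filter
open scoped ComplexOrder

open Real in
lemma odd_moment (b : ℝ) : ∫ x : ℝ, x * Real.exp (-b * x ^ 2) = 0 := by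
  have h := integral_neg_eq_self (fun x : ℝ => x * Real.exp (-b * x ^ 2)) (volume : Measure ℝ)
  simp only [neg_sq, neg_mul] at h
  rw [integral_neg] at h
  simp only [neg_mul] at h ⊢
  linarith

open Real in
lemma shifted_moment {b : ℝ} (hb : 0 < b) (m : ℝ) :
    (Integrable (fun x : ℝ => x * Real.exp (-b * (x - m) ^ 2)) volume) ∧
    ∫ x : ℝ, x * Real.exp (-b * (x - m) ^ 2) = m * Real.sqrt (π / b) := by
  have hint : Integrable (fun y : ℝ => (y + m) * Real.exp (-b * y ^ 2)) volume := by
    have h1 := integrable_mul_exp_neg_mul_sq hb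
    have h2 := (integrable_exp_neg_mul_sq hb).const_mul m
    have := h1.add h2
    refine this.congr (Eventually.of_forall fun x => ?_)
    simp; ring
  have key : (fun x : ℝ => x * Real.exp (-b * (x - m) ^ 2)) =
      (fun x : ℝ => (fun y : ℝ => (y + m) * Real.exp (-b * y ^ 2)) (x - m)) := by
    funext x; ring_nf
  constructor
  · rw [key]; exact hint.comp_sub_right m
  · rw [key, integral_sub_right_eq_self (fun y : ℝ => (y + m) * Real.exp (-b * y ^ 2)) m]
    have : ∀ y : ℝ, (y + m) * Real.exp (-b * y ^ 2)
        = y * Real.exp (-b * y ^ 2) + m * Real.exp (-b * y ^ 2) := fun y => by ring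
    simp_rw [this]
    rw [integral_add (integrable_mul_exp_neg_mul_sq hb)
      ((integrable_exp_neg_mul_sq hb).const_mul m), odd_moment,
      MeasureTheory.integral_const_mul, integral_gaussian]
    ring

open Real in
lemma G_mul {s : ℝ} (hs : 0 < s) (u v : ℝ) :
    G s u * G s v = (π * s ^ 2) ^ (-(1/2) : ℝ) * Real.exp (-(u^2+v^2) / (2*s^2)) := by
  have hps : (0:ℝ) < π * s ^ 2 := by positivity
  have hc : (π*s^2) ^ (-(1/4):ℝ) * (π*s^2) ^ (-(1/4):ℝ) = (π*s^2) ^ (-(1/2):ℝ) := by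
    rw [← Real.rpow_add hps]; norm_num
  have he : Real.exp (-u^2/(2*s^2)) * Real.exp (-v^2/(2*s^2))
      = Real.exp (-(u^2+v^2)/(2*s^2)) := by
    rw [← Real.exp_add]; congr 1; ring
  unfold G
  calc (π*s^2) ^ (-(1/4):ℝ) * Real.exp (-u^2/(2*s^2)) *
        ((π*s^2) ^ (-(1/4):ℝ) * Real.exp (-v^2/(2*s^2)))
      = ((π*s^2) ^ (-(1/4):ℝ) * (π*s^2) ^ (-(1/4):ℝ)) *
        (Real.exp (-u^2/(2*s^2)) * Real.exp (-v^2/(2*s^2))) := by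
        ring
    _ = _ := by rw [hc, he]

open Real in
lemma K_sqrt {s : ℝ} (hs : 0 < s) :
    (π * s ^ 2) ^ (-(1/2) : ℝ) * Real.sqrt (π / (1/s^2)) = 1 := by
  have hps : (0:ℝ) < π * s ^ 2 := by positivity
  have h1 : π / (1/s^2) = π * s ^ 2 := by field_simp
  rw [h1, Real.sqrt_eq_rpow, ← Real.rpow_add hps]
  norm_num

open Real in
lemma J1 {s : ℝ} (hs : 0 < s) :
    Integrable (fun x : ℝ => x * (G s (x-1) * G s (x-1))) volume ∧
    ∫ x : ℝ, x * (G s (x-1) * G s (x-1)) = 1 := by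
  have hb : (0:ℝ) < 1/s^2 := by positivity
  have h : ∀ x : ℝ, x * (G s (x-1) * G s (x-1))
      = (π * s ^ 2) ^ (-(1/2) : ℝ) * (x * Real.exp (-(1/s^2) * (x-1)^2)) := by
    intro x
    rw [G_mul hs]
    rw [show (-(((x-1)^2+(x-1)^2)) / (2*s^2)) = -(1/s^2) * (x-1)^2 by ring]
    ring
  constructor
  · exact (((shifted_moment hb 1).1.const_mul _).congr
      (Eventually.of_forall fun x => (h x).symm))
  · simp_rw [h]
    rw [MeasureTheory.integral_const_mul, (shifted_moment hb 1).2, one_mul, K_sqrt hs]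

open Real in
lemma J3 {s : ℝ} (hs : 0 < s) :
    Integrable (fun x : ℝ => x * (G s x * G s x)) volume ∧
    ∫ x : ℝ, x * (G s x * G s x) = 0 := by
  have hb : (0:ℝ) < 1/s^2 := by positivity
  have h : ∀ x : ℝ, x * (G s x * G s x)
      = (π * s ^ 2) ^ (-(1/2) : ℝ) * (x * Real.exp (-(1/s^2) * (x-0)^2)) := by
    intro x
    rw [G_mul hs]
    rw [show (-((x^2+x^2)) / (2*s^2)) = -(1/s^2) * (x-0)^2 by ring]
    ring
  constructor
  · exact (((shifted_moment hb 0).1.const_mul _).congr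
      (Eventually.of_forall fun x => (h x).symm))
  · simp_rw [h]
    rw [MeasureTheory.integral_const_mul, (shifted_moment hb 0).2]
    ring

open Real in
lemma J2 {s : ℝ} (hs : 0 < s) :
    Integrable (fun x : ℝ => x * (G s (x-1) * G s x)) volume ∧
    ∫ x : ℝ, x * (G s (x-1) * G s x) = 1/2 * Real.exp (-1/(4*s^2)) := by
  have hb : (0:ℝ) < 1/s^2 := by positivity
  have hs' : s ≠ 0 := ne_of_gt hs
  have h : ∀ x : ℝ, x * (G s (x-1) * G s x)
      = ((π * s ^ 2) ^ (-(1/2) : ℝ) * Real.exp (-1/(4*s^2)))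
        * (x * Real.exp (-(1/s^2) * (x - 1/2)^2)) := by
    intro x
    rw [G_mul hs]
    rw [show Real.exp (-(((x-1)^2+x^2)) / (2*s^2))
        = Real.exp (-1/(4*s^2)) * Real.exp (-(1/s^2) * (x-1/2)^2) by
      rw [← Real.exp_add]; congr 1; field_simp; ring]
    ring
  constructor
  · exact (((shifted_moment hb (1/2)).1.const_mul _).congr
      (Eventually.of_forall fun x => (h x).symm))
  · simp_rw [h]
    rw [MeasureTheory.integral_const_mul, (shifted_moment hb (1/2)).2]
    have := K_sqrt hs
    nlinarith [Real.exp_pos (-1/(4*s^2)), Real.sqrt_nonneg (π / (1/s^2))]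

/-- Weak measurement limit: for a density matrix `ρ` and orthogonal
projections `E`, `P`, `lim_{s → ∞} ∫ x · tr((N^s_x)† P N^s_x ρ) dx = Re tr(ρ E P)`,
i.e. the post-selected pointer expectation recovers Allahverdyan's work
quasi-probability (the Margenau–Hill distribution). -/
theorem weak_measurement_limit_margenau_hill
    (n : ℕ) (ρ E P : Matrix (Fin n) (Fin n) ℂ)
    (hρ : ρ.PosSemidef) (hρtr : ρ.trace = 1)
    (hE : E.IsHermitian) (hE2 : E * E = E)
    (hP : P.IsHermitian) (hP2 : P * P = P) :
    Tendsto (fun s : ℝ => ∫ x : ℝ, (x : ℂ) * Matrix.trace ((Ns E s x)ᴴ * P * Ns E s x * ρ))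
      atTop (nhds (((Matrix.trace (ρ * E * P)).re : ℝ) : ℂ)) := by
  -- the Kraus operators are Hermitian
  have hNs : ∀ s x : ℝ, (Ns E s x)ᴴ = Ns E s x := by
    intro s x
    unfold Ns
    rw [conjTranspose_add, conjTranspose_smul, conjTranspose_smul, hE.eq,
      conjTranspose_sub, conjTranspose_one, hE.eq]
    simp [Complex.star_def, Complex.conj_ofReal]
  -- pointwise expansion of the integrand
  have hint : ∀ s x : ℝ, (x : ℂ) * Matrix.trace ((Ns E s x)ᴴ * P * Ns E s x * ρ)
      = ((x * (G s (x-1) * G s (x-1)) : ℝ) : ℂ) * Matrix.trace (E * (P * (E * ρ)))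
      + ((x * (G s (x-1) * G s x) : ℝ) : ℂ) * (Matrix.trace (E * (P * ((1 - E) * ρ)))
          + Matrix.trace ((1 - E) * (P * (E * ρ))))
      + ((x * (G s x * G s x) : ℝ) : ℂ) * Matrix.trace ((1 - E) * (P * ((1 - E) * ρ))) := by
    intro s x
    rw [hNs]
    unfold Ns
    simp only [Matrix.add_mul, Matrix.mul_add, smul_mul_assoc, mul_smul_comm, smul_smul,
      Matrix.mul_assoc, Matrix.trace_add, Matrix.trace_smul, smul_eq_mul]
    push_cast
    ring
  set c1 : ℂ := Matrix.trace (E * (P * (E * ρ))) with hc1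
  set c23 : ℂ := Matrix.trace (E * (P * ((1 - E) * ρ)))
      + Matrix.trace ((1 - E) * (P * (E * ρ))) with hc23
  set c4 : ℂ := Matrix.trace ((1 - E) * (P * ((1 - E) * ρ))) with hc4
  -- value of the integral for each s > 0
  have hval : ∀ s : ℝ, 0 < s →
      (∫ x : ℝ, (x : ℂ) * Matrix.trace ((Ns E s x)ᴴ * P * Ns E s x * ρ))
        = c1 + ((1/2 * Real.exp (-1/(4*s^2)) : ℝ) : ℂ) * c23 := by
    intro s hs
    have i1 : Integrable (fun x : ℝ => ((x * (G s (x-1) * G s (x-1)) : ℝ) : ℂ) * c1) volume :=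
      ((J1 hs).1.ofReal).mul_const c1
    have i2 : Integrable (fun x : ℝ => ((x * (G s (x-1) * G s x) : ℝ) : ℂ) * c23) volume :=
      ((J2 hs).1.ofReal).mul_const c23
    have i3 : Integrable (fun x : ℝ => ((x * (G s x * G s x) : ℝ) : ℂ) * c4) volume :=
      ((J3 hs).1.ofReal).mul_const c4
    calc (∫ x : ℝ, (x : ℂ) * Matrix.trace ((Ns E s x)ᴴ * P * Ns E s x * ρ))
        = ∫ x : ℝ, (((x * (G s (x-1) * G s (x-1)) : ℝ) : ℂ) * c1
          + ((x * (G s (x-1) * G s x) : ℝ) : ℂ) * c23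
          + ((x * (G s x * G s x) : ℝ) : ℂ) * c4) := by
          exact integral_congr_ae (Eventually.of_forall fun x => hint s x)
      _ = (∫ x : ℝ, ((x * (G s (x-1) * G s (x-1)) : ℝ) : ℂ) * c1)
          + (∫ x : ℝ, ((x * (G s (x-1) * G s x) : ℝ) : ℂ) * c23)
          + (∫ x : ℝ, ((x * (G s x * G s x) : ℝ) : ℂ) * c4) := by
          have i12 : Integrable (fun x : ℝ => ((x * (G s (x-1) * G s (x-1)) : ℝ) : ℂ) * c1
              + ((x * (G s (x-1) * G s x) : ℝ) : ℂ) * c23) volume := i1.add i2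
          rw [integral_add i12 i3, integral_add i1 i2]
      _ = ((∫ x : ℝ, x * (G s (x-1) * G s (x-1)) : ℝ) : ℂ) * c1
          + ((∫ x : ℝ, x * (G s (x-1) * G s x) : ℝ) : ℂ) * c23
          + ((∫ x : ℝ, x * (G s x * G s x) : ℝ) : ℂ) * c4 := by
          have e1 : ∫ x : ℝ, ((x * (G s (x-1) * G s (x-1)) : ℝ) : ℂ)
              = ((∫ x : ℝ, x * (G s (x-1) * G s (x-1)) : ℝ) : ℂ) := integral_ofReal
          have e2 : ∫ x : ℝ, ((x * (G s (x-1) * G s x) : ℝ) : ℂ)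
              = ((∫ x : ℝ, x * (G s (x-1) * G s x) : ℝ) : ℂ) := integral_ofReal
          have e3 : ∫ x : ℝ, ((x * (G s x * G s x) : ℝ) : ℂ)
              = ((∫ x : ℝ, x * (G s x * G s x) : ℝ) : ℂ) := integral_ofReal
          rw [integral_mul_const, integral_mul_const, integral_mul_const, e1, e2, e3]
      _ = c1 + ((1/2 * Real.exp (-1/(4*s^2)) : ℝ) : ℂ) * c23 := by
          rw [(J1 hs).2, (J2 hs).2, (J3 hs).2]
          push_cast
          ring
  -- the limit of the explicit formula
  have hlim : Tendsto (fun s : ℝ => c1 + ((1/2 * Real.exp (-1/(4*s^2)) : ℝ) : ℂ) * c23)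
      atTop (nhds (c1 + ((1/2 : ℝ) : ℂ) * c23)) := by
    have h1 : Tendsto (fun s : ℝ => -1/(4*s^2)) atTop (nhds 0) := by
      have h2 : Tendsto (fun s : ℝ => 4 * s ^ 2) atTop atTop :=
        (tendsto_pow_atTop two_ne_zero).const_mul_atTop (by norm_num)
      have h3 := h2.inv_tendsto_atTop
      have h4 : (fun s : ℝ => -1/(4*s^2)) = fun s : ℝ => -((4 * s^2)⁻¹) := by
        funext s; rw [neg_div]; rw [one_div]
      rw [h4]
      simpa using h3.neg
    have h5 : Tendsto (fun s : ℝ => 1/2 * Real.exp (-1/(4*s^2))) atTop (nhds (1/2 : ℝ)) := by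
      have := (Real.continuous_exp.tendsto 0).comp h1
      simpa using this.const_mul (1/2 : ℝ)
    have h6 : Tendsto (fun s : ℝ => ((1/2 * Real.exp (-1/(4*s^2)) : ℝ) : ℂ))
        atTop (nhds ((1/2 : ℝ) : ℂ)) :=
      (Complex.continuous_ofReal.tendsto _).comp h5
    exact (h6.mul_const c23).const_add c1
  -- identify the limit value
  have hfinal : c1 + ((1/2 : ℝ) : ℂ) * c23 = ((Matrix.trace (ρ * E * P)).re : ℂ) := by
    set z : ℂ := Matrix.trace (E * (P * ρ)) with hz
    have hzz : Matrix.trace (ρ * E * P) = z := by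
      rw [hz, ← Matrix.mul_assoc]
      exact (Matrix.trace_mul_cycle E P ρ).symm
    have hstar : Matrix.trace (P * (E * ρ)) = starRingEnd ℂ z := by
      have h7 : (E * (P * ρ))ᴴ = ρ * (P * E) := by
        rw [conjTranspose_mul, conjTranspose_mul, hρ.1.eq, hP.eq, hE.eq, Matrix.mul_assoc]
      have h8 := Matrix.trace_conjTranspose (E * (P * ρ))
      rw [h7] at h8
      rw [show Matrix.trace (P * (E * ρ)) = Matrix.trace (ρ * (P * E)) by
        rw [← Matrix.mul_assoc, ← Matrix.mul_assoc]
        exact Matrix.trace_mul_cycle P E ρ, h8]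
      rfl
    have hc23' : c23 = z + starRingEnd ℂ z - 2 * c1 := by
      rw [hc23, hc1]
      have e1 : E * (P * ((1 - E) * ρ)) = E * (P * ρ) - E * (P * (E * ρ)) := by
        rw [Matrix.sub_mul, Matrix.one_mul, Matrix.mul_sub, Matrix.mul_sub]
      have e2 : (1 - E) * (P * (E * ρ)) = P * (E * ρ) - E * (P * (E * ρ)) := by
        rw [Matrix.sub_mul, Matrix.one_mul]
      rw [e1, e2, Matrix.trace_sub, Matrix.trace_sub, hstar, ← hz]
      ring
    rw [hzz, hc23']
    have hac := Complex.add_conj z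
    have : ((z.re : ℝ) : ℂ) = (z + starRingEnd ℂ z) / 2 := by
      rw [hac]; push_cast; ring
    rw [this]
    push_cast
    ring
  rw [← hfinal]
  refine hlim.congr' ?_
  filter_upwards [eventually_gt_atTop (0:ℝ)] with s hs
  exact (hval s hs).symm
end

section
/- Let ρ be a density matrix and E, Π orthogonal projections on ℂⁿ, with Ẽ = I − E and N^s_x = G_s(x−1)·E + G_s(x)·Ẽ. Then in the strong (projective) measurement limit, lim_{s → 0⁺} ∫_{−∞}^{+∞} x · tr((N^s_x)† Π N^s_x ρ) dx = tr(Π E ρ E), i.e. the post-selected pointer expectation recovers the two-point-measurement joint probability. -/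
/-!
Write `E₁ = E` and `E₀ = 1 - E`, so that `N^s_x = G_s(x - 1) E₁ + G_s(x - 0) E₀` and, `E` being
Hermitian, the integrand is `∑_{a,b} x G_s(x - a) G_s(x - b) tr(E_a P E_b ρ)`. Completing the
square, `G_s(x - a) G_s(x - b)` is `exp(-(a - b)² / 4s²)` times the normal density of mean
`(a + b) / 2` and variance `s² / 2`, so its first moment is `exp(-(a - b)² / 4s²) (a + b) / 2`.
This is `1` for `a = b = 1`, `0` for `a = b = 0`, and `exp(-1 / 4s²) / 2 → 0` for the two
interference terms, leaving `tr(E P E ρ) = tr(P E ρ E)` in the limit.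
-/

open MeasureTheory Matrix Filter
open scoped ComplexOrder Topology

open ProbabilityTheory
open scoped NNReal

lemma integrable_gaussianPDFReal_mul_id (μ : ℝ) (v : ℝ≥0) :
    Integrable fun x => gaussianPDFReal μ v x * x := by
  rcases eq_or_ne v 0 with rfl | hv
  · simp
  have h := (memLp_id_gaussianReal (μ := μ) (v := v) 1).integrable le_rfl
  rw [gaussianReal_of_var_ne_zero _ hv,
    integrable_withDensity_iff_integrable_smul' (measurable_gaussianPDF μ v)
      (ae_of_all _ fun _ => gaussianPDF_lt_top)] at h
  simpa [toReal_gaussianPDF] using h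

lemma integral_gaussianPDFReal_mul_id (μ : ℝ) {v : ℝ≥0} (hv : v ≠ 0) :
    ∫ x, gaussianPDFReal μ v x * x = μ := by
  simpa [integral_gaussianReal_eq_integral_smul hv] using
    integral_id_gaussianReal (μ := μ) (v := v)

lemma G_sub_mul_G_sub {s : ℝ} (hs : s ≠ 0) (a b x : ℝ) :
    G s (x - a) * G s (x - b) =
      Real.exp (-(a - b) ^ 2 / (4 * s ^ 2)) *
        gaussianPDFReal ((a + b) / 2) (s ^ 2 / 2).toNNReal x := by
  have hπs : 0 < Real.pi * s ^ 2 := by positivity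
  have hnorm : (Real.pi * s ^ 2) ^ (-(1 / 4 : ℝ)) * (Real.pi * s ^ 2) ^ (-(1 / 4 : ℝ)) =
      (√(2 * Real.pi * (s ^ 2 / 2)))⁻¹ := by
    rw [← Real.rpow_add hπs, Real.sqrt_eq_rpow, ← Real.rpow_neg (by positivity)]
    congr 1 <;> ring
  rw [G, G, gaussianPDFReal_def, Real.coe_toNNReal _ (by positivity), mul_mul_mul_comm, hnorm,
    ← Real.exp_add, mul_left_comm, ← Real.exp_add]
  congr 2
  field_simp
  ring

lemma integrable_mul_G_sub_mul_G_sub {s : ℝ} (hs : s ≠ 0) (a b : ℝ) :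
    Integrable fun x => x * (G s (x - a) * G s (x - b)) := by
  simp_rw [G_sub_mul_G_sub hs, mul_left_comm _ (Real.exp _), mul_comm _ (gaussianPDFReal _ _ _)]
  exact (integrable_gaussianPDFReal_mul_id _ _).const_mul _

lemma integral_mul_G_sub_mul_G_sub {s : ℝ} (hs : s ≠ 0) (a b : ℝ) :
    ∫ x, x * (G s (x - a) * G s (x - b)) =
      Real.exp (-(a - b) ^ 2 / (4 * s ^ 2)) * ((a + b) / 2) := by
  simp_rw [G_sub_mul_G_sub hs, mul_left_comm _ (Real.exp _), mul_comm _ (gaussianPDFReal _ _ _)]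
  rw [integral_const_mul, integral_gaussianPDFReal_mul_id _ (by simpa using sq_pos_of_ne_zero hs)]

lemma tendsto_exp_neg_div_sq_nhdsNE_zero {c : ℝ} (hc : 0 < c) :
    Tendsto (fun s : ℝ => Real.exp (-c / s ^ 2)) (𝓝[≠] 0) (𝓝 0) := by
  have hsq : Tendsto (fun s : ℝ => s ^ 2) (𝓝[≠] 0) (𝓝[>] 0) := by
    refine tendsto_nhdsWithin_of_tendsto_nhds_of_eventually_within _ ?_ ?_
    · simpa using ((continuous_pow 2).tendsto (0 : ℝ)).mono_left nhdsWithin_le_nhds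
    · filter_upwards [self_mem_nhdsWithin] with s hs
      exact sq_pos_of_ne_zero hs
  have := (tendsto_inv_nhdsGT_zero.comp hsq).const_mul_atTop hc
  refine Real.tendsto_exp_atBot.comp ?_
  simpa [neg_div, div_eq_mul_inv, Function.comp_def] using tendsto_neg_atTop_atBot.comp this

section Pointer

variable {n : ℕ} {E : Matrix (Fin n) (Fin n) ℂ}

lemma trace_conjTranspose_Ns_mul (hE : E.IsHermitian) (P ρ : Matrix (Fin n) (Fin n) ℂ)
    (s x : ℝ) :
    trace ((Ns E s x)ᴴ * P * Ns E s x * ρ) =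
      (G s (x - 1) * G s (x - 1) : ℝ) * trace (E * P * E * ρ) +
      (G s (x - 1) * G s (x - 0) : ℝ) *
        (trace (E * P * (1 - E) * ρ) + trace ((1 - E) * P * E * ρ)) +
      (G s (x - 0) * G s (x - 0) : ℝ) * trace ((1 - E) * P * (1 - E) * ρ) := by
  simp only [Ns, sub_zero, conjTranspose_add, conjTranspose_smul, conjTranspose_sub,
    conjTranspose_one, hE.eq, Complex.star_def, Complex.conj_ofReal, Matrix.add_mul,
    Matrix.mul_add, Matrix.smul_mul, Matrix.mul_smul, trace_add, trace_smul, smul_eq_mul]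
  push_cast
  ring

lemma integral_mul_trace_Ns (hE : E.IsHermitian) (P ρ : Matrix (Fin n) (Fin n) ℂ) {s : ℝ}
    (hs : s ≠ 0) :
    ∫ x : ℝ, (x : ℂ) * trace ((Ns E s x)ᴴ * P * Ns E s x * ρ) =
      trace (E * P * E * ρ) + (Real.exp (-1 / (4 * s ^ 2)) / 2 : ℝ) *
        (trace (E * P * (1 - E) * ρ) + trace ((1 - E) * P * E * ρ)) := by
  have moment (a b : ℝ) (c : ℂ) :
      Integrable (fun x : ℝ => ((x * (G s (x - a) * G s (x - b)) : ℝ) : ℂ) * c) ∧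
      ∫ x : ℝ, ((x * (G s (x - a) * G s (x - b)) : ℝ) : ℂ) * c =
        (Real.exp (-(a - b) ^ 2 / (4 * s ^ 2)) * ((a + b) / 2) : ℝ) * c := by
    refine ⟨(integrable_mul_G_sub_mul_G_sub hs a b).ofReal.mul_const c, ?_⟩
    rw [integral_mul_const, integral_complex_ofReal, integral_mul_G_sub_mul_G_sub hs]
  set c₁ := trace (E * P * E * ρ)
  set c₂ := trace (E * P * (1 - E) * ρ) + trace ((1 - E) * P * E * ρ)
  set c₃ := trace ((1 - E) * P * (1 - E) * ρ)
  obtain ⟨int₁, eq₁⟩ := moment 1 1 c₁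
  obtain ⟨int₂, eq₂⟩ := moment 1 0 c₂
  obtain ⟨int₃, eq₃⟩ := moment 0 0 c₃
  have expand : (fun x : ℝ => (x : ℂ) * trace ((Ns E s x)ᴴ * P * Ns E s x * ρ)) = fun x =>
      ((x * (G s (x - 1) * G s (x - 1)) : ℝ) : ℂ) * c₁ +
        ((x * (G s (x - 1) * G s (x - 0)) : ℝ) : ℂ) * c₂ +
        ((x * (G s (x - 0) * G s (x - 0)) : ℝ) : ℂ) * c₃ := by
    ext x
    rw [trace_conjTranspose_Ns_mul hE]
    push_cast
    ring
  rw [expand, integral_add (int₁.fun_add int₂) int₃, integral_add int₁ int₂, eq₁, eq₂, eq₃]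
  norm_num [div_eq_mul_inv]

end Pointer

theorem strong_measurement_limit_tpm_general
    (n : ℕ) (ρ E P : Matrix (Fin n) (Fin n) ℂ)
    (hE : E.IsHermitian) :
    Tendsto (fun s : ℝ => ∫ x : ℝ, (x : ℂ) * Matrix.trace ((Ns E s x)ᴴ * P * Ns E s x * ρ))
      (𝓝[>] (0 : ℝ)) (nhds (Matrix.trace (P * E * ρ * E))) := by
  have hexp : Tendsto (fun s : ℝ => Real.exp (-1 / (4 * s ^ 2))) (𝓝[>] 0) (𝓝 0) := by
    have h := (tendsto_exp_neg_div_sq_nhdsNE_zero (c := 1 / 4) (by norm_num)).mono_left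
      (nhdsWithin_mono 0 fun _ hs => ne_of_gt hs)
    refine h.congr fun s => ?_
    ring_nf
  have hlim := (((Complex.continuous_ofReal.tendsto _).comp (hexp.div_const 2)).mul_const
    (trace (E * P * (1 - E) * ρ) + trace ((1 - E) * P * E * ρ))).const_add (trace (E * P * E * ρ))
  rw [zero_div, Complex.ofReal_zero, zero_mul, add_zero] at hlim
  rw [trace_mul_comm, ← Matrix.mul_assoc, ← Matrix.mul_assoc]
  refine hlim.congr' ?_
  filter_upwards [self_mem_nhdsWithin] with s hs
  exact (integral_mul_trace_Ns hE P ρ (ne_of_gt hs)).symm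

/-- Strong (projective) measurement limit: for a density matrix `ρ`
and orthogonal projections `E`, `P`,
`lim_{s → 0⁺} ∫ x · tr((N^s_x)† P N^s_x ρ) dx = tr(P E ρ E)`,
i.e. the post-selected pointer expectation recovers the two-point-measurement
joint probability. -/
theorem strong_measurement_limit_tpm
    (n : ℕ) (ρ E P : Matrix (Fin n) (Fin n) ℂ)
    (hρ : ρ.PosSemidef) (hρtr : ρ.trace = 1)
    (hE : E.IsHermitian) (hE2 : E * E = E)
    (hP : P.IsHermitian) (hP2 : P * P = P) :
    Tendsto (fun s : ℝ => ∫ x : ℝ, (x : ℂ) * Matrix.trace ((Ns E s x)ᴴ * P * Ns E s x * ρ))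
      (𝓝[>] (0 : ℝ)) (nhds (Matrix.trace (P * E * ρ * E))) :=
  strong_measurement_limit_tpm_general n ρ E P hE
end

section
/- Let ρ be a density matrix and E, Π orthogonal projections on ℂⁿ with p_Π := tr(Π ρ) > 0. With Ẽ = I − E, N^s_x = G_s(x−1)·E + G_s(x)·Ẽ, p^s_− := (1/p_Π) ∫_{−∞}^{0} tr((N^s_x)† Π N^s_x ρ) dx, and p^s_d := (1 − e^{−1/(4s²)})/2, one has the exact asymptotic lim_{s → ∞} s · ( p^s_− − 1/2 − p^s_d / p_Π ) = − Re tr(ρ E Π) / (p_Π √π). -/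
open MeasureTheory Matrix Filter
open scoped ComplexOrder

/-- The conditional probability of a negative pointer reading given successful
post-selection: `p^s_− = (1/p_P) ∫_{−∞}^{0} tr((N^s_x)† P N^s_x ρ) dx`, where
`p_P = tr(P ρ)`. -/
noncomputable def pminus {n : ℕ} (ρ E P : Matrix (Fin n) (Fin n) ℂ) (s : ℝ) : ℝ :=
  (1 / (Matrix.trace (P * ρ)).re)
    * ∫ x in Set.Iio (0 : ℝ), (Matrix.trace ((Ns E s x)ᴴ * P * Ns E s x * ρ)).re

/-! Expanding `N^s_x = G_s(x-1) E + G_s(x) Ẽ` gives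
`tr(N† Π N ρ) = G_s(x-1)² a + G_s(x)² b + 2 G_s(x-1) G_s(x) c` with `a = Re tr(EΠEρ)`,
`b = Re tr(ẼΠẼρ)`, `c = Re tr(EΠẼρ)`, where `p_Π = a + b + 2c` and `Re tr(ρEΠ) = a + c`.
Since `G_s(x-1) G_s(x) = e^{-1/(4s²)} G_s(x-1/2)²`, only the masses `q_s(m)`
(`negReadingProb s m`) that the shifted densities `G_s(· - m)²` give to the negative half-line
enter, and
`s (1/2 - q_s(m)) = π^{-1/2} ∫₀^m e^{-u²/s²} du → m/√π`; the disturbance term `p^s_d` is `O(1/s²)`. -/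

open Real Set Topology

lemma setIntegral_Iio_comp_sub {E : Type*} [NormedAddCommGroup E] [NormedSpace ℝ E]
    {f : ℝ → E} (hf : Integrable f) (c : ℝ) :
    ∫ x in Iio 0, f (x - c) = (∫ x in Iio 0, f x) - ∫ x in -c..0, f x := by
  have hshift : ∫ x in Iio 0, f (x - c) = ∫ x in Iic (-c), f x := by
    have hpre : (fun x : ℝ => x - c) ⁻¹' Iic (-c) = Iic 0 := by
      ext x; simp
    rw [← integral_Iic_eq_integral_Iio, ← hpre]
    exact (measurePreserving_sub_right volume c).setIntegral_preimage_emb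
      (Homeomorph.subRight c).isClosedEmbedding.measurableEmbedding f _
  rw [hshift, ← integral_Iic_eq_integral_Iio,
    ← intervalIntegral.integral_Iic_sub_Iic hf.integrableOn hf.integrableOn]
  exact (sub_sub_cancel _ _).symm

lemma tendsto_intervalIntegral_exp_neg_mul_sq (a b : ℝ) :
    Tendsto (fun r => ∫ x in a..b, exp (-r * x ^ 2)) (𝓝 0) (𝓝 (b - a)) := by
  have hcont : Continuous fun r => ∫ x in a..b, exp (-r * x ^ 2) :=
    intervalIntegral.continuous_parametric_intervalIntegral_of_continuous' (by fun_prop) a b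
  simpa using hcont.tendsto 0

lemma tendsto_exp_neg_inv_sq : Tendsto (fun s : ℝ => exp (-1 / (4 * s ^ 2))) atTop (𝓝 1) :=
  tendsto_exp_nhds_zero_nhds_one.comp <|
    tendsto_const_nhds.div_atTop ((tendsto_pow_atTop two_ne_zero).const_mul_atTop four_pos)

lemma tendsto_mul_one_sub_exp_neg_inv_sq :
    Tendsto (fun s : ℝ => s * (1 - exp (-1 / (4 * s ^ 2)))) atTop (𝓝 0) := by
  have hbound : Tendsto (fun s : ℝ => (4 * s)⁻¹) atTop (𝓝 0) :=
    tendsto_inv_atTop_zero.comp (tendsto_id.const_mul_atTop four_pos)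
  refine squeeze_zero' ?_ ?_ hbound
  all_goals filter_upwards [eventually_gt_atTop 0] with s hs
  · have hexp : exp (-1 / (4 * s ^ 2)) ≤ 1 :=
      exp_le_one_iff.mpr (div_nonpos_of_nonpos_of_nonneg (by norm_num) (by positivity))
    exact mul_nonneg hs.le (sub_nonneg.mpr hexp)
  · calc s * (1 - exp (-1 / (4 * s ^ 2))) ≤ s * (1 / (4 * s ^ 2)) := by
          gcongr
          linarith [add_one_le_exp (-1 / (4 * s ^ 2)), neg_div (4 * s ^ 2) 1]
      _ = (4 * s)⁻¹ := by field_simp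

section Gaussian

variable {s : ℝ}

lemma G_neg (s x : ℝ) : G s (-x) = G s x := by
  simp only [G, neg_sq]

lemma G_sq (hs : 0 < s) (x : ℝ) : G s x ^ 2 = (√π * s)⁻¹ * exp (-(s ^ 2)⁻¹ * x ^ 2) := by
  have hπs : 0 < π * s ^ 2 := by positivity
  have hK : ((π * s ^ 2) ^ (-(1 / 4 : ℝ))) ^ 2 = (√π * s)⁻¹ := by
    have hsqrt : √π * s = (π * s ^ 2) ^ (1 / 2 : ℝ) := by
      rw [← Real.sqrt_eq_rpow, Real.sqrt_mul pi_pos.le, Real.sqrt_sq hs.le]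
    rw [hsqrt, ← Real.rpow_natCast, ← Real.rpow_mul hπs.le, ← Real.rpow_neg hπs.le]
    norm_num
  rw [G, mul_pow, hK, ← Real.exp_nat_mul]
  congr 2
  push_cast
  ring

lemma G_sub_one_mul_G (s x : ℝ) :
    G s (x - 1) * G s x = exp (-1 / (4 * s ^ 2)) * G s (x - 1 / 2) ^ 2 := by
  have hexp : -(x - 1) ^ 2 / (2 * s ^ 2) + -x ^ 2 / (2 * s ^ 2)
      = -1 / (4 * s ^ 2) + (-(x - 1 / 2) ^ 2 / (2 * s ^ 2) + -(x - 1 / 2) ^ 2 / (2 * s ^ 2)) := by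
    ring
  simp only [G]
  rw [mul_mul_mul_comm, ← Real.exp_add, hexp, Real.exp_add, Real.exp_add]
  ring

lemma integrable_G_sq (hs : 0 < s) : Integrable (fun x => G s x ^ 2) := by
  simp only [G_sq hs]
  exact (integrable_exp_neg_mul_sq (by positivity)).const_mul _

lemma setIntegral_Iio_G_sq (hs : 0 < s) : ∫ x in Iio 0, G s x ^ 2 = 1 / 2 := by
  rw [← integral_Iic_eq_integral_Iio, ← neg_zero, ← integral_comp_neg_Ioi]
  simp only [G_neg, G_sq hs, integral_const_mul, integral_gaussian_Ioi]
  rw [div_inv_eq_mul, Real.sqrt_mul pi_pos.le, Real.sqrt_sq hs.le]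
  field_simp

noncomputable def negReadingProb (s c : ℝ) : ℝ := ∫ x in Iio 0, G s (x - c) ^ 2

lemma mul_half_sub_negReadingProb (hs : 0 < s) (c : ℝ) :
    s * (1 / 2 - negReadingProb s c) = (√π)⁻¹ * ∫ x in (0 : ℝ)..c, exp (-(s ^ 2)⁻¹ * x ^ 2) := by
  have hsym : ∫ x in -c..0, G s x ^ 2 = ∫ x in (0 : ℝ)..c, G s x ^ 2 := by
    simpa only [G_neg, neg_zero] using
      (intervalIntegral.integral_comp_neg (a := 0) (b := c) (fun x => G s x ^ 2)).symm
  rw [negReadingProb, setIntegral_Iio_comp_sub (integrable_G_sq hs), setIntegral_Iio_G_sq hs,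
    sub_sub_cancel, hsym]
  simp only [G_sq hs, intervalIntegral.integral_const_mul]
  field_simp

lemma tendsto_mul_half_sub_negReadingProb (c : ℝ) :
    Tendsto (fun s => s * (1 / 2 - negReadingProb s c)) atTop (𝓝 (c / √π)) := by
  have hr : Tendsto (fun s : ℝ => (s ^ 2)⁻¹) atTop (𝓝 0) :=
    tendsto_inv_atTop_zero.comp (tendsto_pow_atTop two_ne_zero)
  have hlim := ((tendsto_intervalIntegral_exp_neg_mul_sq 0 c).comp hr).const_mul (√π)⁻¹
  rw [sub_zero, ← div_eq_inv_mul] at hlim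
  refine hlim.congr' ?_
  filter_upwards [eventually_gt_atTop 0] with s hs
  exact (mul_half_sub_negReadingProb hs c).symm

end Gaussian

section Trace

variable {m : Type*} [Fintype m]

lemma re_trace_mul_mul_mul_of_isHermitian {X Y Z W : Matrix m m ℂ} (hX : X.IsHermitian)
    (hY : Y.IsHermitian) (hZ : Z.IsHermitian) (hW : W.IsHermitian) :
    (trace (X * Y * Z * W)).re = (trace (Z * Y * X * W)).re := by
  have h : (X * Y * Z * W)ᴴ = W * (Z * Y * X) := by
    simp only [conjTranspose_mul, hX.eq, hY.eq, hZ.eq, hW.eq, Matrix.mul_assoc]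
  rw [← Complex.conj_re, ← Complex.star_def, ← trace_conjTranspose, h, trace_mul_comm]

variable [DecidableEq m] {ρ E P : Matrix m m ℂ}

lemma re_trace_kraus (hE : E.IsHermitian) (hP : P.IsHermitian) (hρ : ρ.IsHermitian) (a b : ℝ) :
    (trace (((a : ℂ) • E + (b : ℂ) • (1 - E))ᴴ * P * ((a : ℂ) • E + (b : ℂ) • (1 - E)) * ρ)).re
      = a ^ 2 * (trace (E * P * E * ρ)).re + b ^ 2 * (trace ((1 - E) * P * (1 - E) * ρ)).re
        + 2 * (a * b) * (trace (E * P * (1 - E) * ρ)).re := by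
  have hswap : (trace ((1 - E) * P * E * ρ)).re = (trace (E * P * (1 - E) * ρ)).re :=
    re_trace_mul_mul_mul_of_isHermitian (isHermitian_one.sub hE) hP hE hρ
  have hN : ((a : ℂ) • E + (b : ℂ) • (1 - E))ᴴ = (a : ℂ) • E + (b : ℂ) • (1 - E) := by
    simp [conjTranspose_sub, hE.eq]
  rw [hN]
  simp only [add_mul, mul_add, smul_mul_assoc, mul_smul_comm, trace_add, trace_smul, smul_eq_mul,
    Complex.add_re, Complex.re_ofReal_mul, hswap]
  ring

lemma re_trace_mul_eq (hE : E.IsHermitian) (hP : P.IsHermitian) (hρ : ρ.IsHermitian) :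
    (trace (P * ρ)).re = (trace (E * P * E * ρ)).re + (trace ((1 - E) * P * (1 - E) * ρ)).re
      + 2 * (trace (E * P * (1 - E) * ρ)).re := by
  simpa using re_trace_kraus hE hP hρ 1 1

lemma re_trace_mul_mul_eq (ρ E P : Matrix m m ℂ) :
    (trace (ρ * E * P)).re = (trace (E * P * E * ρ)).re + (trace (E * P * (1 - E) * ρ)).re := by
  rw [Matrix.mul_assoc, trace_mul_comm, ← Complex.add_re, ← trace_add]
  congr 3
  noncomm_ring

end Trace

lemma setIntegral_Iio_re_trace_Ns {n : ℕ} {ρ E P : Matrix (Fin n) (Fin n) ℂ} (hE : E.IsHermitian)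
    (hP : P.IsHermitian) (hρ : ρ.IsHermitian) {s : ℝ} (hs : 0 < s) :
    ∫ x in Iio 0, (trace ((Ns E s x)ᴴ * P * Ns E s x * ρ)).re
      = negReadingProb s 1 * (trace (E * P * E * ρ)).re
        + 1 / 2 * (trace ((1 - E) * P * (1 - E) * ρ)).re
        + 2 * (exp (-1 / (4 * s ^ 2)) * negReadingProb s (1 / 2))
          * (trace (E * P * (1 - E) * ρ)).re := by
  have hint (c : ℝ) : IntegrableOn (fun x => G s (x - c) ^ 2) (Iio 0) :=
    ((integrable_G_sq hs).comp_sub_right c).integrableOn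
  have hint₀ : IntegrableOn (fun x => G s x ^ 2) (Iio 0) := (integrable_G_sq hs).integrableOn
  simp only [Ns, re_trace_kraus hE hP hρ, G_sub_one_mul_G]
  rw [integral_add, integral_add]
  · simp only [integral_mul_const, integral_const_mul, setIntegral_Iio_G_sq hs, negReadingProb]
  · exact (hint 1).mul_const _
  · exact hint₀.mul_const _
  · exact ((hint 1).mul_const _).add (hint₀.mul_const _)
  · exact (((hint (1 / 2)).const_mul _).const_mul _).mul_const _

theorem pminus_asymptotics_general
    (n : ℕ) (ρ E P : Matrix (Fin n) (Fin n) ℂ)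
    (hρ : ρ.PosSemidef)
    (hE : E.IsHermitian)
    (hP : P.IsHermitian)
    (hpos : 0 < (Matrix.trace (P * ρ)).re) :
    Tendsto (fun s : ℝ =>
        s * (pminus ρ E P s - 1 / 2 - pd s / (Matrix.trace (P * ρ)).re))
      atTop
      (nhds (-(Matrix.trace (ρ * E * P)).re
        / ((Matrix.trace (P * ρ)).re * Real.sqrt Real.pi))) := by
  set A := (trace (E * P * E * ρ)).re
  set X := (trace (E * P * (1 - E) * ρ)).re
  have hp : (trace (P * ρ)).re = A + (trace ((1 - E) * P * (1 - E) * ρ)).re + 2 * X :=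
    re_trace_mul_eq hE hP hρ.1
  have hlim := (((tendsto_mul_half_sub_negReadingProb 1).const_mul A).add
    ((tendsto_exp_neg_inv_sq.mul (tendsto_mul_half_sub_negReadingProb (1 / 2))).const_mul
      (2 * X))).add (tendsto_mul_one_sub_exp_neg_inv_sq.mul_const (X + 1 / 2))
    |>.neg.div_const (trace (P * ρ)).re
  convert hlim.congr' ?_ using 2
  · rw [re_trace_mul_mul_eq]
    field_simp
    ring
  · filter_upwards [eventually_gt_atTop 0] with s hs
    rw [pminus, setIntegral_Iio_re_trace_Ns hE hP hρ.1 hs, pd]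
    simp only [A, X] at hp ⊢
    rw [hp] at hpos ⊢
    field_simp
    ring

/-- For a density matrix `ρ` and orthogonal projections `E`, `P` with
`p_P = tr(P ρ) > 0`, one has the exact asymptotic
`lim_{s → ∞} s · (p^s_− − 1/2 − p^s_d/p_P) = − Re tr(ρ E P) / (p_P √π)`. -/
theorem pminus_asymptotics
    (n : ℕ) (ρ E P : Matrix (Fin n) (Fin n) ℂ)
    (hρ : ρ.PosSemidef) (hρtr : ρ.trace = 1)
    (hE : E.IsHermitian) (hE2 : E * E = E)
    (hP : P.IsHermitian) (hP2 : P * P = P)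
    (hpos : 0 < (Matrix.trace (P * ρ)).re) :
    Tendsto (fun s : ℝ =>
        s * (pminus ρ E P s - 1 / 2 - pd s / (Matrix.trace (P * ρ)).re))
      atTop
      (nhds (-(Matrix.trace (ρ * E * P)).re
        / ((Matrix.trace (P * ρ)).re * Real.sqrt Real.pi))) :=
  pminus_asymptotics_general n ρ E P hρ hE hP hpos
end

section
/- Uniqueness of the work POVM (key step in the no-go Theorem 1): let {|k⟩}_{k=1..n} be an orthonormal basis of ℂⁿ, U a unitary matrix, and {|j⟩}_{j=1..n} an orthonormal basis. Suppose {M_{ij}}_{i,j=1..n} is a family of positive semidefinite n×n matrices such that for every density matrix ρ that is diagonal in the basis {|k⟩} one has tr(ρ M_{ij}) = ⟨i|ρ|i⟩ · |⟨j|U|i⟩|² for all i, j. Then necessarily M_{ij} = |⟨j|U|i⟩|² · |i⟩⟨i| for all i, j, i.e. the only POVM reproducing the two-point-measurement statistics on all classical states is the two-point-measurement POVM itself. -/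
open Matrix
open scoped ComplexOrder

/-- The rank-one outer product `|v⟩⟨v|`. -/
def outer {n : ℕ} (v : Fin n → ℂ) : Matrix (Fin n) (Fin n) ℂ :=
  Matrix.vecMulVec v (star v)

/-!
Evaluated on the classical states `|k⟩⟨k|`, the hypothesis gives `⟨k|M|k⟩ = 0` for `k ≠ i`,
and positivity of `M` upgrades this to `M|k⟩ = 0`. Completeness of the basis then gives
`M = M |i⟩⟨i|`, hence, `M` being Hermitian, `M = |i⟩⟨i| M |i⟩⟨i| = ⟨i|M|i⟩ |i⟩⟨i|`;
and `⟨i|M|i⟩` is the statistics on the state `|i⟩⟨i|`.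
-/

section Outer

variable {n : ℕ}

lemma posSemidef_outer (x : Fin n → ℂ) : (outer x).PosSemidef :=
  posSemidef_vecMulVec_self_star x

lemma trace_outer (x : Fin n → ℂ) : (outer x).trace = star x ⬝ᵥ x :=
  (trace_vecMulVec x (star x)).trans (dotProduct_comm x (star x))

lemma trace_outer_mul (x : Fin n → ℂ) (A : Matrix (Fin n) (Fin n) ℂ) :
    (outer x * A).trace = star x ⬝ᵥ A *ᵥ x := by
  rw [outer, vecMulVec_mul, trace_vecMulVec, dotProduct_comm, dotProduct_mulVec]

lemma outer_mulVec (x y : Fin n → ℂ) : outer x *ᵥ y = (star x ⬝ᵥ y) • x := by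
  rw [outer, vecMulVec_mulVec, op_smul_eq_smul]

lemma outer_mul_mul_outer (x : Fin n → ℂ) (A : Matrix (Fin n) (Fin n) ℂ) :
    outer x * A * outer x = (star x ⬝ᵥ A *ᵥ x) • outer x := by
  rw [Matrix.mul_assoc, outer, mul_vecMulVec, vecMulVec_mul_vecMulVec, vecMulVec_smul]

lemma sum_outer_eq_one {v : Fin n → Fin n → ℂ}
    (hv : ∀ k l, star (v k) ⬝ᵥ v l = if k = l then 1 else 0) :
    ∑ k, outer (v k) = 1 := by
  set V : Matrix (Fin n) (Fin n) ℂ := of fun a k => v k a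
  have hVV : Vᴴ * V = 1 := by
    ext k l
    simpa [mul_apply, conjTranspose_apply, dotProduct, V, one_apply] using hv k l
  ext a b
  rw [← mul_eq_one_comm.mp hVV]
  simp [outer, vecMulVec_apply, mul_apply, conjTranspose_apply, Matrix.sum_apply, V]

end Outer

section OrthonormalBasis

variable {n : ℕ} {v : Fin n → Fin n → ℂ}

lemma mul_outer_eq_self_of_mulVec_eq_zero
    (hv : ∀ k l, star (v k) ⬝ᵥ v l = if k = l then 1 else 0)
    {A : Matrix (Fin n) (Fin n) ℂ} {i : Fin n} (hA : ∀ k, k ≠ i → A *ᵥ v k = 0) :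
    A * outer (v i) = A := by
  conv_rhs => rw [← Matrix.mul_one A, ← sum_outer_eq_one hv, Finset.mul_sum]
  refine (Finset.sum_eq_single_of_mem (f := fun k => A * outer (v k)) i (Finset.mem_univ i)
    fun k _ hk => ?_).symm
  rw [outer, mul_vecMulVec, hA k hk, zero_vecMulVec]

lemma eq_smul_outer_of_mulVec_eq_zero
    (hv : ∀ k l, star (v k) ⬝ᵥ v l = if k = l then 1 else 0)
    {A : Matrix (Fin n) (Fin n) ℂ} (hA : A.IsHermitian) {i : Fin n}
    (hker : ∀ k, k ≠ i → A *ᵥ v k = 0) :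
    A = (star (v i) ⬝ᵥ A *ᵥ v i) • outer (v i) := by
  have hright := mul_outer_eq_self_of_mulVec_eq_zero hv hker
  have hleft : outer (v i) * A = A := by
    simpa [conjTranspose_mul, hA.eq, (posSemidef_outer (v i)).isHermitian.eq]
      using congrArg conjTranspose hright
  rw [← outer_mul_mul_outer, hleft, hright]

lemma dotProduct_mulVec_eq_of_trace_mul_eq
    (hv : ∀ k l, star (v k) ⬝ᵥ v l = if k = l then 1 else 0)
    {A : Matrix (Fin n) (Fin n) ℂ} {i : Fin n} {c : ℂ}
    (hstat : ∀ ρ : Matrix (Fin n) (Fin n) ℂ, ρ.PosSemidef → ρ.trace = 1 →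
      (∃ p : Fin n → ℝ, ρ = ∑ k, (p k : ℂ) • outer (v k)) →
      (ρ * A).trace = (star (v i) ⬝ᵥ (ρ *ᵥ v i)) * c)
    (k : Fin n) :
    star (v k) ⬝ᵥ A *ᵥ v k = if k = i then c else 0 := by
  have hclassical : ∃ p : Fin n → ℝ, outer (v k) = ∑ l, (p l : ℂ) • outer (v l) :=
    ⟨Pi.single k 1, by simp [Pi.single_apply, apply_ite (fun r : ℝ => (r : ℂ)), ite_smul]⟩
  have htrace : (outer (v k)).trace = 1 := by simpa [trace_outer] using hv k k
  rw [← trace_outer_mul, hstat _ (posSemidef_outer (v k)) htrace hclassical, outer_mulVec,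
    dotProduct_smul, smul_eq_mul, hv i k, hv k i]
  by_cases hki : k = i
  · simp [hki]
  · simp [hki, Ne.symm hki]

end OrthonormalBasis

theorem work_povm_uniqueness_general
    (n : ℕ) (v w : Fin n → (Fin n → ℂ))
    (hv : ∀ k l, star (v k) ⬝ᵥ v l = if k = l then 1 else 0)
    (U : Matrix (Fin n) (Fin n) ℂ)
    (M : Fin n → Fin n → Matrix (Fin n) (Fin n) ℂ)
    (hM : ∀ i j, (M i j).PosSemidef)
    (hstat : ∀ ρ : Matrix (Fin n) (Fin n) ℂ, ρ.PosSemidef → ρ.trace = 1 →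
      (∃ p : Fin n → ℝ, ρ = ∑ k, (p k : ℂ) • outer (v k)) →
      ∀ i j, Matrix.trace (ρ * M i j)
        = (star (v i) ⬝ᵥ (ρ *ᵥ v i))
            * ((‖star (w j) ⬝ᵥ (U *ᵥ v i)‖ ^ 2 : ℝ) : ℂ))
    (i j : Fin n) :
    M i j = ((‖star (w j) ⬝ᵥ (U *ᵥ v i)‖ ^ 2 : ℝ) : ℂ) • outer (v i) := by
  have hdiag :=
    dotProduct_mulVec_eq_of_trace_mul_eq hv fun ρ hρ htr hcl => hstat ρ hρ htr hcl i j
  have hker : ∀ k, k ≠ i → M i j *ᵥ v k = 0 := fun k hk =>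
    ((hM i j).dotProduct_mulVec_zero_iff (v k)).mp (by rw [hdiag k, if_neg hk])
  rw [eq_smul_outer_of_mulVec_eq_zero hv (hM i j).isHermitian hker, hdiag i, if_pos rfl]

/-- uniqueness of the work POVM. Let `{|k⟩}` be an orthonormal basis
of `ℂⁿ`, `U` unitary and `{|j⟩}` an orthonormal basis. If `{M_{ij}}` is a family of
positive semidefinite matrices such that `tr(ρ M_{ij}) = ⟨i|ρ|i⟩ · |⟨j|U|i⟩|²` for every
density matrix `ρ` diagonal in the basis `{|k⟩}`, then
`M_{ij} = |⟨j|U|i⟩|² · |i⟩⟨i|` for all `i`, `j`. -/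
theorem work_povm_uniqueness
    (n : ℕ) (v w : Fin n → (Fin n → ℂ))
    (hv : ∀ k l, star (v k) ⬝ᵥ v l = if k = l then 1 else 0)
    (hw : ∀ k l, star (w k) ⬝ᵥ w l = if k = l then 1 else 0)
    (U : Matrix (Fin n) (Fin n) ℂ) (hU : Uᴴ * U = 1)
    (M : Fin n → Fin n → Matrix (Fin n) (Fin n) ℂ)
    (hM : ∀ i j, (M i j).PosSemidef)
    (hstat : ∀ ρ : Matrix (Fin n) (Fin n) ℂ, ρ.PosSemidef → ρ.trace = 1 →
      (∃ p : Fin n → ℝ, ρ = ∑ k, (p k : ℂ) • outer (v k)) →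
      ∀ i j, Matrix.trace (ρ * M i j)
        = (star (v i) ⬝ᵥ (ρ *ᵥ v i))
            * ((‖star (w j) ⬝ᵥ (U *ᵥ v i)‖ ^ 2 : ℝ) : ℂ))
    (i j : Fin n) :
    M i j = ((‖star (w j) ⬝ᵥ (U *ᵥ v i)‖ ^ 2 : ℝ) : ℂ) • outer (v i) :=
  work_povm_uniqueness_general n v w hv U M hM hstat i j
end
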